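/- arXiv:0901.4954 — 2 statements merged into one kernel-verified Lean document; each statement's English description precedes it below -/
import Mathlib

section
/- Let P_initial and P_final be stochastic matrices on a finite state space Ω, with P_final irreducible and aperiodic with stationary distribution π_f and mixing time t_mix. For any 0 < ε < 1, if T ≥ C · t_mix(ε/2)² / ε for a suitable universal constant C, then for every probability distribution ν, ‖ν P_{1/T} P_{2/T} ⋯ P_{(T−1)/T} P_1 − π_f‖_TV ≤ ε, where P_s = (1−s)P_initial + s P_final. -/
/-!
Let `t = t_mix(ε/2)`; the hypothesis on `T` (with `C = 2`) gives `t ≤ T` and `2t²/T ≤ ε`.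
Whatever the first `T - t` steps of the schedule do, they produce some distribution `μ`. Each of the
last `t` kernels is `P_s` with `1 - s ≤ t/T`, so its rows are within `2t/T` of those of `P_final`
in `ℓ¹`. Stochastic matrices are `ℓ¹` contractions, so replacing these kernels one at a time by
`P_final` moves the result by at most `t · 2t/T ≤ ε`, i.e. `ε/2` in total variation, and
`μ P_final^t` is within `ε/2` of `π_f` by the choice of `t`.

That the mixing time is finite at all is Doeblin's argument: if every entry of `P_final^k` is at
least `δ > 0`, then `P_final^k` contracts vectors of total mass zero by the factor `1 - |Ω| δ`.
-/

open Matrix Finset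

section StochasticMatrix

variable {n : Type*} [Fintype n] {P Q : Matrix n n ℝ}

lemma sum_abs_sub_triangle (a b c : n → ℝ) :
    ∑ y, |a y - c y| ≤ ∑ y, |a y - b y| + ∑ y, |b y - c y| := by
  rw [← sum_add_distrib]
  exact sum_le_sum fun y _ => abs_sub_le _ _ _

lemma sum_abs_sub_le_two {μ ν : n → ℝ} (hμ : μ ∈ stdSimplex ℝ n) (hν : ν ∈ stdSimplex ℝ n) :
    ∑ x, |μ x - ν x| ≤ 2 :=
  calc ∑ x, |μ x - ν x| ≤ ∑ x, (μ x + ν x) := sum_le_sum fun x _ => by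
        rw [abs_sub_le_iff]; constructor <;> linarith [hμ.1 x, hν.1 x]
    _ = 2 := by rw [sum_add_distrib, hμ.2, hν.2]; norm_num

lemma sum_abs_vecMul_sub_vecMul_le {μ : n → ℝ} (hμ : μ ∈ stdSimplex ℝ n) {η : ℝ}
    (hPQ : ∀ x, ∑ y, |P x y - Q x y| ≤ η) :
    ∑ y, |(μ ᵥ* P) y - (μ ᵥ* Q) y| ≤ η :=
  calc ∑ y, |(μ ᵥ* P) y - (μ ᵥ* Q) y| ≤ ∑ y, ∑ x, μ x * |P x y - Q x y| :=
        sum_le_sum fun y _ => by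
          simp only [vecMul, dotProduct, ← sum_sub_distrib, ← mul_sub]
          refine (abs_sum_le_sum_abs _ _).trans_eq <| sum_congr rfl fun x _ => ?_
          rw [abs_mul, abs_of_nonneg (hμ.1 x)]
    _ = ∑ x, μ x * ∑ y, |P x y - Q x y| := by rw [sum_comm]; simp [mul_sum]
    _ ≤ ∑ x, μ x * η := sum_le_sum fun x _ => mul_le_mul_of_nonneg_left (hPQ x) (hμ.1 x)
    _ = η := by rw [← sum_mul, hμ.2, one_mul]

variable [DecidableEq n]

lemma sum_vecMul_of_mem_rowStochastic (hP : P ∈ rowStochastic ℝ n) (v : n → ℝ) :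
    ∑ y, (v ᵥ* P) y = ∑ x, v x := by
  simp only [vecMul, dotProduct]
  rw [sum_comm]
  simp [← mul_sum, sum_row_of_mem_rowStochastic hP]

lemma vecMul_mem_stdSimplex (hP : P ∈ rowStochastic ℝ n) {μ : n → ℝ}
    (hμ : μ ∈ stdSimplex ℝ n) : μ ᵥ* P ∈ stdSimplex ℝ n :=
  ⟨nonneg_vecMul_of_mem_rowStochastic hP hμ.1,
    (sum_vecMul_of_mem_rowStochastic hP μ).trans hμ.2⟩

lemma row_mem_stdSimplex (hP : P ∈ rowStochastic ℝ n) (x : n) : P x ∈ stdSimplex ℝ n :=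
  ⟨fun _ => nonneg_of_mem_rowStochastic hP, sum_row_of_mem_rowStochastic hP x⟩

lemma vecMul_pow_eq_self {π : n → ℝ} (hπ : π ᵥ* P = π) (t : ℕ) : π ᵥ* P ^ t = π := by
  induction t with
  | zero => exact vecMul_one π
  | succ t ih => rw [pow_succ, ← vecMul_vecMul, ih, hπ]

lemma foldl_vecMul_eq_vecMul_prod {α : Type*} (M : α → Matrix n n ℝ) (L : List α) (ν : n → ℝ) :
    L.foldl (fun μ k => μ ᵥ* M k) ν = ν ᵥ* (L.map M).prod := by
  induction L generalizing ν with
  | nil => exact (vecMul_one ν).symm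
  | cons k L ih => rw [List.foldl_cons, ih, List.map_cons, List.prod_cons, vecMul_vecMul]

lemma sum_abs_vecMul_le (hP : P ∈ rowStochastic ℝ n) (w : n → ℝ) :
    ∑ y, |(w ᵥ* P) y| ≤ ∑ x, |w x| :=
  calc ∑ y, |(w ᵥ* P) y| ≤ ∑ y, ∑ x, |w x| * P x y := sum_le_sum fun y _ =>
        (abs_sum_le_sum_abs _ _).trans_eq <| sum_congr rfl fun x _ => by
          rw [abs_mul, abs_of_nonneg (nonneg_of_mem_rowStochastic hP)]
    _ = ∑ x, |w x| := by
        rw [sum_comm]; simp [← mul_sum, sum_row_of_mem_rowStochastic hP]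

/-- Doeblin's contraction: on vectors of total mass zero, subtracting the uniform lower bound `δ`
from every entry of `P` does not change `w ᵥ* P`, and what is left has row sums `1 - card n * δ`. -/
lemma sum_abs_vecMul_le_of_le_apply (hP : P ∈ rowStochastic ℝ n) {δ : ℝ}
    (hδ : ∀ x y, δ ≤ P x y) {w : n → ℝ} (hw : ∑ x, w x = 0) :
    ∑ y, |(w ᵥ* P) y| ≤ (1 - Fintype.card n * δ) * ∑ x, |w x| := by
  have hshift : ∀ y, (w ᵥ* P) y = ∑ x, w x * (P x y - δ) := fun y => by
    simp [vecMul, dotProduct, mul_sub, sum_sub_distrib, ← sum_mul, hw]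
  calc ∑ y, |(w ᵥ* P) y| ≤ ∑ y, ∑ x, |w x| * (P x y - δ) := sum_le_sum fun y _ => by
        rw [hshift]
        refine (abs_sum_le_sum_abs _ _).trans_eq <| sum_congr rfl fun x _ => ?_
        rw [abs_mul, abs_of_nonneg (sub_nonneg.2 (hδ x y))]
    _ = (1 - Fintype.card n * δ) * ∑ x, |w x| := by
        rw [sum_comm, mul_sum]
        refine sum_congr rfl fun x _ => ?_
        rw [← mul_sum, sum_sub_distrib, sum_row_of_mem_rowStochastic hP, sum_const,
          card_univ, nsmul_eq_mul, mul_comm]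

lemma card_mul_le_one_of_le_apply [Nonempty n] (hP : P ∈ rowStochastic ℝ n) {δ : ℝ}
    (hδ : ∀ x y, δ ≤ P x y) : Fintype.card n * δ ≤ 1 := by
  obtain ⟨x⟩ := ‹Nonempty n›
  calc Fintype.card n * δ = ∑ _y : n, δ := by simp
    _ ≤ ∑ y, P x y := sum_le_sum fun y _ => hδ x y
    _ = 1 := sum_row_of_mem_rowStochastic hP x

lemma sum_abs_vecMul_pow_le_of_le_apply [Nonempty n] (hP : P ∈ rowStochastic ℝ n) {δ : ℝ}
    (hδ : ∀ x y, δ ≤ P x y) {w : n → ℝ} (hw : ∑ x, w x = 0) (m : ℕ) :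
    ∑ y, |(w ᵥ* P ^ m) y| ≤ (1 - Fintype.card n * δ) ^ m * ∑ x, |w x| := by
  induction m with
  | zero => simp
  | succ m ih =>
    have hwm : ∑ x, (w ᵥ* P ^ m) x = 0 := by
      rw [sum_vecMul_of_mem_rowStochastic (pow_mem hP m), hw]
    calc ∑ y, |(w ᵥ* P ^ (m + 1)) y| = ∑ y, |((w ᵥ* P ^ m) ᵥ* P) y| := by
          rw [pow_succ, vecMul_vecMul]
      _ ≤ (1 - Fintype.card n * δ) * ∑ x, |(w ᵥ* P ^ m) x| :=
          sum_abs_vecMul_le_of_le_apply hP hδ hwm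
      _ ≤ (1 - Fintype.card n * δ) * ((1 - Fintype.card n * δ) ^ m * ∑ x, |w x|) :=
          mul_le_mul_of_nonneg_left ih (sub_nonneg.2 (card_mul_le_one_of_le_apply hP hδ))
      _ = (1 - Fintype.card n * δ) ^ (m + 1) * ∑ x, |w x| := by ring

lemma exists_sum_abs_vecMul_pow_sub_le (hP : P ∈ rowStochastic ℝ n)
    (hprim : ∃ k : ℕ, ∀ x y, 0 < (P ^ k) x y) {π : n → ℝ} (hπ : π ∈ stdSimplex ℝ n)
    (hstat : π ᵥ* P = π) {η : ℝ} (hη : 0 < η) :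
    ∃ t : ℕ, ∀ μ ∈ stdSimplex ℝ n, ∑ y, |(μ ᵥ* P ^ t) y - π y| ≤ η := by
  obtain ⟨k, hk⟩ := hprim
  have : Nonempty n := by
    by_contra h
    simpa [not_nonempty_iff.1 h] using hπ.2
  obtain ⟨⟨x₀, y₀⟩, hmin⟩ := Finite.exists_min fun p : n × n => (P ^ k) p.1 p.2
  set δ := (P ^ k) x₀ y₀
  have hδ : ∀ x y, δ ≤ (P ^ k) x y := fun x y => hmin (x, y)
  have hcard : 0 < Fintype.card n * δ := mul_pos (by exact_mod_cast Fintype.card_pos) (hk _ _)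
  obtain ⟨m, hm⟩ := exists_pow_lt_of_lt_one (half_pos hη) (sub_lt_self 1 hcard)
  refine ⟨k * m, fun μ hμ => ?_⟩
  have hw : ∑ x, (μ - π) x = 0 := by simp [sum_sub_distrib, hμ.2, hπ.2]
  calc ∑ y, |(μ ᵥ* P ^ (k * m)) y - π y| = ∑ y, |((μ - π) ᵥ* (P ^ k) ^ m) y| := by
        rw [← pow_mul, sub_vecMul, vecMul_pow_eq_self hstat]; rfl
    _ ≤ (1 - Fintype.card n * δ) ^ m * ∑ x, |μ x - π x| :=
        sum_abs_vecMul_pow_le_of_le_apply (pow_mem hP k) hδ hw m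
    _ ≤ η / 2 * 2 := mul_le_mul hm.le (sum_abs_sub_le_two hμ hπ) (sum_nonneg fun _ _ =>
        abs_nonneg _) (half_pos hη).le
    _ = η := by ring

end StochasticMatrix

section Adiabatic

variable {n : Type*} [Fintype n] [DecidableEq n] {A B P : Matrix n n ℝ}

def interpolate (A B : Matrix n n ℝ) (s : ℝ) : Matrix n n ℝ := (1 - s) • A + s • B

lemma interpolate_mem_rowStochastic (hA : A ∈ rowStochastic ℝ n) (hB : B ∈ rowStochastic ℝ n)
    {s : ℝ} (hs₀ : 0 ≤ s) (hs₁ : s ≤ 1) : interpolate A B s ∈ rowStochastic ℝ n :=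
  convex_rowStochastic hA hB (sub_nonneg.2 hs₁) hs₀ (sub_add_cancel 1 s)

lemma sum_abs_interpolate_sub_le (hA : A ∈ rowStochastic ℝ n) (hB : B ∈ rowStochastic ℝ n)
    {s : ℝ} (hs₁ : s ≤ 1) (x : n) : ∑ y, |interpolate A B s x y - B x y| ≤ 2 * (1 - s) :=
  calc ∑ y, |interpolate A B s x y - B x y| = (1 - s) * ∑ y, |A x y - B x y| := by
        rw [mul_sum]
        refine sum_congr rfl fun y _ => ?_
        have hdiff : interpolate A B s x y - B x y = (1 - s) * (A x y - B x y) := by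
          simp only [interpolate, Matrix.add_apply, Matrix.smul_apply, smul_eq_mul]
          ring
        rw [hdiff, abs_mul, abs_of_nonneg (sub_nonneg.2 hs₁)]
    _ ≤ (1 - s) * 2 := mul_le_mul_of_nonneg_left
        (sum_abs_sub_le_two (row_mem_stdSimplex hA x) (row_mem_stdSimplex hB x))
        (sub_nonneg.2 hs₁)
    _ = 2 * (1 - s) := mul_comm _ _

lemma sum_abs_vecMul_prod_sub_vecMul_pow_le (hP : P ∈ rowStochastic ℝ n)
    {Ms : List (Matrix n n ℝ)} (hMs : ∀ M ∈ Ms, M ∈ rowStochastic ℝ n) {η : ℝ}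
    (hclose : ∀ M ∈ Ms, ∀ x, ∑ y, |M x y - P x y| ≤ η) {μ : n → ℝ} (hμ : μ ∈ stdSimplex ℝ n) :
    ∑ y, |(μ ᵥ* Ms.prod) y - (μ ᵥ* P ^ Ms.length) y| ≤ Ms.length * η := by
  induction Ms generalizing μ with
  | nil => simp
  | cons M Ms ih =>
    have hM := hMs M List.mem_cons_self
    have hrest := ih (fun N hN => hMs N (List.mem_cons_of_mem M hN))
      (fun N hN => hclose N (List.mem_cons_of_mem M hN)) (vecMul_mem_stdSimplex hM hμ)
    have hfirst : ∑ y, |((μ ᵥ* M) ᵥ* P ^ Ms.length) y - ((μ ᵥ* P) ᵥ* P ^ Ms.length) y| ≤ η := by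
      simpa only [sub_vecMul, Pi.sub_apply] using
        (sum_abs_vecMul_le (pow_mem hP _) (μ ᵥ* M - μ ᵥ* P)).trans
          (sum_abs_vecMul_sub_vecMul_le hμ (hclose M List.mem_cons_self))
    rw [List.prod_cons, List.length_cons, pow_succ', ← vecMul_vecMul, ← vecMul_vecMul]
    calc ∑ y, |((μ ᵥ* M) ᵥ* Ms.prod) y - ((μ ᵥ* P) ᵥ* P ^ Ms.length) y|
        ≤ ∑ y, |((μ ᵥ* M) ᵥ* Ms.prod) y - ((μ ᵥ* M) ᵥ* P ^ Ms.length) y|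
          + ∑ y, |((μ ᵥ* M) ᵥ* P ^ Ms.length) y - ((μ ᵥ* P) ᵥ* P ^ Ms.length) y| :=
          sum_abs_sub_triangle _ _ _
      _ ≤ Ms.length * η + η := add_le_add hrest hfirst
      _ = (Ms.length + 1 : ℕ) * η := by push_cast; ring

noncomputable def adiabaticStep (A B : Matrix n n ℝ) (T k : ℕ) : Matrix n n ℝ :=
  interpolate A B ((k + 1) / T)

noncomputable def adiabaticProduct (A B : Matrix n n ℝ) (T : ℕ) : Matrix n n ℝ :=
  ((List.range T).map (adiabaticStep A B T)).prod

lemma adiabaticStep_mem_rowStochastic (hA : A ∈ rowStochastic ℝ n)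
    (hB : B ∈ rowStochastic ℝ n) {T k : ℕ} (hk : k < T) :
    adiabaticStep A B T k ∈ rowStochastic ℝ n :=
  interpolate_mem_rowStochastic hA hB (by positivity)
    (div_le_one_of_le₀ (by exact_mod_cast hk) (Nat.cast_nonneg T))

lemma sum_abs_adiabaticStep_sub_le (hA : A ∈ rowStochastic ℝ n) (hB : B ∈ rowStochastic ℝ n)
    {T t k : ℕ} (hk : k < T) (hkt : T ≤ k + t) (x : n) :
    ∑ y, |adiabaticStep A B T k x y - B x y| ≤ 2 * t / T := by
  have hT : (0 : ℝ) < T := by exact_mod_cast (Nat.zero_le k).trans_lt hk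
  have hkt' : (T : ℝ) ≤ k + t := by exact_mod_cast hkt
  refine (sum_abs_interpolate_sub_le hA hB
    (div_le_one_of_le₀ (by exact_mod_cast hk) hT.le) x).trans ?_
  rw [mul_one_sub, mul_div_assoc', sub_le_iff_le_add, ← add_div, le_div_iff₀ hT]
  linarith

lemma adiabaticProduct_eq_mul {T t : ℕ} (htT : t ≤ T) :
    adiabaticProduct A B T = ((List.range (T - t)).map (adiabaticStep A B T)).prod *
      ((List.range t).map fun i => adiabaticStep A B T (T - t + i)).prod := by
  rw [adiabaticProduct, ← Nat.sub_add_cancel htT, List.range_add, List.map_append,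
    List.prod_append, List.map_map, Nat.sub_add_cancel htT]
  rfl

lemma exists_sum_abs_vecMul_adiabaticProduct_sub_le (hA : A ∈ rowStochastic ℝ n)
    (hB : B ∈ rowStochastic ℝ n) {T t : ℕ} (htT : t ≤ T) {ν : n → ℝ}
    (hν : ν ∈ stdSimplex ℝ n) :
    ∃ μ ∈ stdSimplex ℝ n,
      ∑ y, |(ν ᵥ* adiabaticProduct A B T) y - (μ ᵥ* B ^ t) y| ≤ 2 * t ^ 2 / T := by
  have hfirst : ∀ M ∈ (List.range (T - t)).map (adiabaticStep A B T), M ∈ rowStochastic ℝ n := by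
    simp only [List.mem_map, List.mem_range]
    rintro _ ⟨k, hk, rfl⟩
    exact adiabaticStep_mem_rowStochastic hA hB (by omega)
  have hlast : ∀ M ∈ (List.range t).map fun i => adiabaticStep A B T (T - t + i),
      M ∈ rowStochastic ℝ n ∧ ∀ x, ∑ y, |M x y - B x y| ≤ 2 * t / T := by
    simp only [List.mem_map, List.mem_range]
    rintro _ ⟨i, hi, rfl⟩
    exact ⟨adiabaticStep_mem_rowStochastic hA hB (by omega),
      sum_abs_adiabaticStep_sub_le hA hB (by omega) (by omega)⟩
  have hμ := vecMul_mem_stdSimplex (list_prod_mem hfirst) hν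
  have hhybrid := sum_abs_vecMul_prod_sub_vecMul_pow_le hB (fun M hM => (hlast M hM).1)
    (fun M hM => (hlast M hM).2) hμ
  rw [List.length_map, List.length_range, vecMul_vecMul, ← adiabaticProduct_eq_mul htT]
    at hhybrid
  exact ⟨_, hμ, hhybrid.trans_eq (by ring)⟩

end Adiabatic

/-- discrete-time adiabatic theorem for Markov chains: there is a universal
constant `C` such that if `T ≥ C · t_mix(ε/2)² / ε` then for every initial distribution `ν`,
`‖ν P_{1/T} P_{2/T} ⋯ P_1 − π_f‖_TV ≤ ε`, where `P_s = (1−s)P_init + s P_fin`. -/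
theorem stmt_12 :
    ∃ C : ℝ, 0 < C ∧
      ∀ (Ω : Type) [Fintype Ω] [DecidableEq Ω] [Nonempty Ω]
        (Pinit Pfin : Matrix Ω Ω ℝ),
        ((∀ x y, 0 ≤ Pinit x y) ∧ ∀ x, ∑ y, Pinit x y = 1) →
        ((∀ x y, 0 ≤ Pfin x y) ∧ ∀ x, ∑ y, Pfin x y = 1) →
        (∃ k : ℕ, ∀ x y, 0 < (Pfin ^ k) x y) →          -- irreducible and aperiodic
        ∀ πf : Ω → ℝ, ((∀ x, 0 ≤ πf x) ∧ ∑ x, πf x = 1) →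
        (∀ y, ∑ x, πf x * Pfin x y = πf y) →             -- stationary distribution
        ∀ ε : ℝ, 0 < ε → ε < 1 →
        ∀ T : ℕ,
        (T : ℝ) ≥ C * (sInf {t : ℕ | ∀ μ : Ω → ℝ, (∀ x, 0 ≤ μ x) → ∑ x, μ x = 1 →
            (1 / 2) * ∑ y, |(Matrix.vecMul μ (Pfin ^ t)) y - πf y| ≤ ε / 2} : ℕ) ^ 2 / ε →
        ∀ ν : Ω → ℝ, (∀ x, 0 ≤ ν x) → ∑ x, ν x = 1 →
        (1 / 2) * ∑ y,
            |((List.range T).foldl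
                (fun (μ : Ω → ℝ) k => Matrix.vecMul μ
                  ((1 - ((k : ℝ) + 1) / T) • Pinit + (((k : ℝ) + 1) / T) • Pfin)) ν) y
              - πf y| ≤ ε := by
  refine ⟨2, two_pos, ?_⟩
  intro Ω _ _ _ Pinit Pfin hPinit hPfin hprim πf hπf hstat ε hε _ T hT ν hν₀ hν₁
  rw [← mem_rowStochastic_iff_sum] at hPinit hPfin
  set S := {t : ℕ | ∀ μ : Ω → ℝ, (∀ x, 0 ≤ μ x) → ∑ x, μ x = 1 →
      (1 / 2) * ∑ y, |(μ ᵥ* Pfin ^ t) y - πf y| ≤ ε / 2}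
  set t := sInf S
  have hmix : ∀ μ ∈ stdSimplex ℝ Ω, (1 / 2) * ∑ y, |(μ ᵥ* Pfin ^ t) y - πf y| ≤ ε / 2 := by
    obtain ⟨t₀, ht₀⟩ := exists_sum_abs_vecMul_pow_sub_le hPfin hprim hπf (funext hstat) hε
    have hS : S.Nonempty := ⟨t₀, fun μ h₀ h₁ => by linarith [ht₀ μ ⟨h₀, h₁⟩]⟩
    exact fun μ hμ => Nat.sInf_mem hS μ hμ.1 hμ.2
  have hT' : 2 * (t : ℝ) ^ 2 ≤ T * ε := (div_le_iff₀ hε).1 hT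
  have htT : t ≤ T := by
    have : (t : ℝ) ≤ t ^ 2 := by exact_mod_cast Nat.le_self_pow two_ne_zero t
    exact_mod_cast (by nlinarith : (t : ℝ) ≤ T)
  obtain ⟨μ, hμ, hclose⟩ :=
    exists_sum_abs_vecMul_adiabaticProduct_sub_le hPinit hPfin htT ⟨hν₀, hν₁⟩
  -- In the statement `List.range T` is lifted to a list of reals, `k` being the cast index.
  simp only [bind_pure_comp, List.map_eq_map, List.foldl_map]
  rw [foldl_vecMul_eq_vecMul_prod]
  have hschedule : 2 * (t : ℝ) ^ 2 / T ≤ ε :=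
    div_le_of_le_mul₀ (Nat.cast_nonneg T) hε.le (by linarith)
  calc (1 / 2) * ∑ y, |(ν ᵥ* adiabaticProduct Pinit Pfin T) y - πf y|
      ≤ (1 / 2) * (∑ y, |(ν ᵥ* adiabaticProduct Pinit Pfin T) y - (μ ᵥ* Pfin ^ t) y|
        + ∑ y, |(μ ᵥ* Pfin ^ t) y - πf y|) :=
        mul_le_mul_of_nonneg_left (sum_abs_sub_triangle _ _ _) (by norm_num)
    _ ≤ ε := by linarith [hmix μ hμ]
end

section
/- For any ν, any stochastic matrices P_initial, P_final with P_final having mixing time t_mix, setting T = K t_mix(ε/2) and N = (K−1) t_mix(ε/2), one has ‖ν P_{1/T} ⋯ P_1 − π_f‖_TV ≤ (T!/(N! T^{T−N})) · max_μ ‖μ P_final^{T−N} − π_f‖_TV + (1 − T!/(N! T^{T−N})). -/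
/-!
Write `μ_k` for the law after `k` steps and `s_k = (k+1)/T`. Since `P_s` dominates `s • P_final`
entrywise, by induction `μ_{N+j} ≥ (s_N ⋯ s_{N+j-1}) • μ_N P_final^j` pointwise; at `j = T - N`
the coefficient is `c = T! / (N! T^(T-N))`. Writing `μ_T = c • μ_N P_final^(T-N) + e` with
`e ≥ 0` of mass `1 - c`, the triangle inequality gives
`‖μ_T - π_f‖_TV ≤ c ‖μ_N P_final^(T-N) - π_f‖_TV + (1 - c)`.
-/

open Matrix Finset
open scoped Nat

namespace Matrix

variable {Ω : Type*} [Fintype Ω]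

lemma vecMul_le_vecMul {u v : Ω → ℝ} {M M' : Matrix Ω Ω ℝ} (hu : 0 ≤ u) (huv : u ≤ v)
    (hM : ∀ i j, 0 ≤ M i j) (hMM' : ∀ i j, M i j ≤ M' i j) : u ᵥ* M ≤ v ᵥ* M' := fun j =>
  sum_le_sum fun i _ => mul_le_mul (huv i) (hMM' i j) (hM i j) (hu.trans huv i)

variable [DecidableEq Ω]

lemma sub_smul_add_smul_mem_rowStochastic {P Q : Matrix Ω Ω ℝ} (hP : P ∈ rowStochastic ℝ Ω)
    (hQ : Q ∈ rowStochastic ℝ Ω) {s : ℝ} (hs₀ : 0 ≤ s) (hs₁ : s ≤ 1) :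
    (1 - s) • P + s • Q ∈ rowStochastic ℝ Ω :=
  convex_rowStochastic hP hQ (sub_nonneg.2 hs₁) hs₀ (sub_add_cancel 1 s)

lemma vecMul_mem_stdSimplex {μ : Ω → ℝ} {M : Matrix Ω Ω ℝ} (hμ : μ ∈ stdSimplex ℝ Ω)
    (hM : M ∈ rowStochastic ℝ Ω) : μ ᵥ* M ∈ stdSimplex ℝ Ω := by
  refine ⟨nonneg_vecMul_of_mem_rowStochastic hM hμ.1, ?_⟩
  rw [← dotProduct_one,
    vecMul_dotProduct_one_eq_one_rowStochastic hM (by rw [dotProduct_one, hμ.2])]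

lemma foldl_vecMul_mem_stdSimplex {F : ℕ → Matrix Ω Ω ℝ} {L : List ℕ}
    (hF : ∀ k ∈ L, F k ∈ rowStochastic ℝ Ω) {μ : Ω → ℝ} (hμ : μ ∈ stdSimplex ℝ Ω) :
    L.foldl (fun ν k => ν ᵥ* F k) μ ∈ stdSimplex ℝ Ω := by
  induction L generalizing μ with
  | nil => exact hμ
  | cons k L ih =>
    exact ih (fun l hl => hF l (List.mem_cons_of_mem k hl))
      (vecMul_mem_stdSimplex hμ (hF k List.mem_cons_self))

lemma smul_vecMul_pow_le_foldl_vecMul {Q : Matrix Ω Ω ℝ} (hQ : ∀ i j, 0 ≤ Q i j)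
    {F : ℕ → Matrix Ω Ω ℝ} {s : ℕ → ℝ} {L : List ℕ}
    (hs : ∀ k ∈ L, 0 ≤ s k ∧ ∀ i j, s k * Q i j ≤ F k i j) {μ : Ω → ℝ} (hμ : 0 ≤ μ) :
    (L.map s).prod • (μ ᵥ* Q ^ L.length) ≤ L.foldl (fun ν k => ν ᵥ* F k) μ := by
  induction L generalizing μ with
  | nil => simp
  | cons k L ih =>
    obtain ⟨hsk, hFk⟩ := hs k List.mem_cons_self
    have hstep : s k • (μ ᵥ* Q) ≤ μ ᵥ* F k := by
      rw [← vecMul_smul]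
      exact vecMul_le_vecMul hμ le_rfl (fun i j => mul_nonneg hsk (hQ i j)) hFk
    have hstep_nonneg : 0 ≤ s k • (μ ᵥ* Q) :=
      smul_nonneg hsk (by simpa using vecMul_le_vecMul le_rfl hμ hQ fun _ _ => le_rfl)
    have hprod_nonneg : 0 ≤ (L.map s).prod :=
      List.prod_nonneg (List.forall_mem_map.2 fun l hl => (hs l (List.mem_cons_of_mem k hl)).1)
    calc ((k :: L).map s).prod • (μ ᵥ* Q ^ (k :: L).length)
        = (L.map s).prod • ((s k • (μ ᵥ* Q)) ᵥ* Q ^ L.length) := by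
          rw [List.map_cons, List.prod_cons, List.length_cons, pow_succ', ← vecMul_vecMul,
            smul_vecMul, smul_smul, mul_comm]
      _ ≤ (L.map s).prod • ((μ ᵥ* F k) ᵥ* Q ^ L.length) :=
          smul_le_smul_of_nonneg_left
            (vecMul_le_vecMul hstep_nonneg hstep (pow_apply_nonneg hQ _) fun _ _ => le_rfl)
            hprod_nonneg
      _ ≤ (k :: L).foldl (fun ν k => ν ᵥ* F k) μ :=
          ih (fun l hl => hs l (List.mem_cons_of_mem k hl)) (hstep_nonneg.trans hstep)

end Matrix

section TotalVariation

variable {Ω : Type*} [Fintype Ω]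

lemma tv_le_of_smul_le {μ w π : Ω → ℝ} {c : ℝ} (hμ : ∑ x, μ x = 1) (hw : ∑ x, w x = 1)
    (hπ : π ∈ stdSimplex ℝ Ω) (hc : 0 ≤ c) (hcw : c • w ≤ μ) :
    (1 / 2) * ∑ y, |μ y - π y| ≤ c * ((1 / 2) * ∑ y, |w y - π y|) + (1 - c) := by
  set e := μ - c • w
  have he : ∀ y, 0 ≤ e y := fun y => sub_nonneg.2 (hcw y)
  have hsum_e : ∑ y, e y = 1 - c := by
    simp [e, sum_sub_distrib, ← mul_sum, hμ, hw]
  have hc₁ : 0 ≤ 1 - c := hsum_e ▸ sum_nonneg fun y _ => he y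
  have hpoint : ∀ y, |μ y - π y| ≤ c * |w y - π y| + (e y + (1 - c) * π y) := by
    intro y
    have hdecomp : μ y - π y = c * (w y - π y) + (e y - (1 - c) * π y) := by simp [e]; ring
    rw [hdecomp]
    refine (abs_add_le _ _).trans (add_le_add ?_ ?_)
    · rw [abs_mul, abs_of_nonneg hc]
    · refine (abs_sub _ _).trans_eq ?_
      rw [abs_of_nonneg (he y), abs_of_nonneg (mul_nonneg hc₁ (hπ.1 y))]
  have hsum := sum_le_sum fun y (_ : y ∈ univ) => hpoint y
  rw [sum_add_distrib, sum_add_distrib, ← mul_sum, ← mul_sum, hsum_e, hπ.2] at hsum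
  linarith

lemma tv_le_one {μ π : Ω → ℝ} (hμ : μ ∈ stdSimplex ℝ Ω) (hπ : π ∈ stdSimplex ℝ Ω) :
    (1 / 2) * ∑ y, |μ y - π y| ≤ 1 := by
  simpa using tv_le_of_smul_le hμ.2 hμ.2 hπ le_rfl (by rw [zero_smul]; exact hμ.1)

lemma bddAbove_range_tv_vecMul [DecidableEq Ω] {M : Matrix Ω Ω ℝ} (hM : M ∈ rowStochastic ℝ Ω)
    {π : Ω → ℝ} (hπ : π ∈ stdSimplex ℝ Ω) :
    BddAbove (Set.range fun μ : stdSimplex ℝ Ω => (1 / 2) * ∑ y, |(μ.1 ᵥ* M) y - π y|) :=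
  ⟨1, by rintro _ ⟨μ, rfl⟩; exact tv_le_one (vecMul_mem_stdSimplex μ.2 hM) hπ⟩

lemma tv_foldl_interpolation_le [DecidableEq Ω] {P Q : Matrix Ω Ω ℝ}
    (hP : P ∈ rowStochastic ℝ Ω) (hQ : Q ∈ rowStochastic ℝ Ω) {s : ℕ → ℝ} {L : List ℕ}
    (hs : ∀ k ∈ L, 0 ≤ s k ∧ s k ≤ 1) {μ π : Ω → ℝ} (hμ : μ ∈ stdSimplex ℝ Ω)
    (hπ : π ∈ stdSimplex ℝ Ω) :
    (1 / 2) * ∑ y, |L.foldl (fun ν k => ν ᵥ* ((1 - s k) • P + s k • Q)) μ y - π y| ≤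
      (L.map s).prod * ((1 / 2) * ∑ y, |(μ ᵥ* Q ^ L.length) y - π y|) +
        (1 - (L.map s).prod) := by
  have hdom := smul_vecMul_pow_le_foldl_vecMul (F := fun k => (1 - s k) • P + s k • Q) hQ.1
    (fun k hk => ⟨(hs k hk).1, fun i j =>
      le_add_of_nonneg_left (mul_nonneg (sub_nonneg.2 (hs k hk).2) (hP.1 i j))⟩) hμ.1
  have hμL := foldl_vecMul_mem_stdSimplex (fun k hk =>
    sub_smul_add_smul_mem_rowStochastic hP hQ (hs k hk).1 (hs k hk).2) hμ
  exact tv_le_of_smul_le hμL.2 (vecMul_mem_stdSimplex hμ (pow_mem hQ _)).2 hπ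
    (List.prod_nonneg (List.forall_mem_map.2 fun k hk => (hs k hk).1)) hdom

end TotalVariation

lemma prod_range_succ_div_eq (N T j : ℕ) :
    ∏ i ∈ range j, (((N + i : ℕ) : ℝ) + 1) / T = ((N + j)! : ℝ) / (N ! * (T : ℝ) ^ j) := by
  rw [← Nat.factorial_mul_ascFactorial, Nat.ascFactorial_eq_prod_range, prod_div_distrib,
    prod_const, card_range]
  push_cast
  rw [mul_div_mul_left _ _ (by positivity)]
  simp only [add_assoc, add_comm (1 : ℝ)]

theorem stmt_14_general {Ω : Type*} [Fintype Ω] [DecidableEq Ω]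
    (Pinit Pfin : Matrix Ω Ω ℝ)
    (hPi : (∀ x y, 0 ≤ Pinit x y) ∧ ∀ x, ∑ y, Pinit x y = 1)
    (hPf : (∀ x y, 0 ≤ Pfin x y) ∧ ∀ x, ∑ y, Pfin x y = 1)
    (πf : Ω → ℝ) (hπf : (∀ x, 0 ≤ πf x) ∧ ∑ x, πf x = 1)
    (m : ℕ)
    (K : ℕ)
    (T N : ℕ) (hT : T = K * m) (hN : N = (K - 1) * m)
    (ν : Ω → ℝ) (hν : (∀ x, 0 ≤ ν x) ∧ ∑ x, ν x = 1) :
    (1 / 2) * ∑ y,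
        |((List.range T).foldl
            (fun (μ : Ω → ℝ) k => Matrix.vecMul μ
              ((1 - ((k : ℝ) + 1) / T) • Pinit + (((k : ℝ) + 1) / T) • Pfin)) ν) y
          - πf y| ≤
      ((T.factorial : ℝ) / (N.factorial * (T : ℝ) ^ (T - N))) *
        (⨆ μ : {μ : Ω → ℝ // (∀ x, 0 ≤ μ x) ∧ ∑ x, μ x = 1},
          (1 / 2) * ∑ y, |(Matrix.vecMul μ.1 (Pfin ^ (T - N))) y - πf y|) +
      (1 - (T.factorial : ℝ) / (N.factorial * (T : ℝ) ^ (T - N))) := by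
  -- the binder `k` is real, so the statement folds over `List.range T` cast to `List ℝ`
  simp only [bind_pure_comp, List.map_eq_map, List.foldl_map]
  rw [← mem_rowStochastic_iff_sum] at hPi hPf
  set s : ℕ → ℝ := fun k => ((k : ℝ) + 1) / T
  have hNT : N ≤ T := hT ▸ hN ▸ Nat.mul_le_mul_right m (Nat.sub_le K 1)
  have hs : ∀ k < T, 0 ≤ s k ∧ s k ≤ 1 := fun k hk =>
    ⟨by positivity, div_le_one_of_le₀ (by exact_mod_cast hk) (Nat.cast_nonneg T)⟩
  have hμN : (List.range N).foldl (fun μ k => μ ᵥ* ((1 - s k) • Pinit + s k • Pfin)) ν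
      ∈ stdSimplex ℝ Ω := foldl_vecMul_mem_stdSimplex (fun k hk =>
    have hkT := (List.mem_range.1 hk).trans_le hNT
    sub_smul_add_smul_mem_rowStochastic hPi hPf (hs k hkT).1 (hs k hkT).2) hν
  have hc : (((List.range (T - N)).map (N + ·)).map s).prod = T ! / (N ! * (T : ℝ) ^ (T - N)) := by
    have h := prod_range_succ_div_eq N T (T - N)
    rw [Nat.add_sub_cancel' hNT] at h
    rw [List.map_map]
    exact h
  have hsplit : List.range T = List.range N ++ (List.range (T - N)).map (N + ·) := by
    rw [← List.range_add, Nat.add_sub_cancel' hNT]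
  rw [hsplit, List.foldl_append]
  refine (tv_foldl_interpolation_le hPi hPf (fun k hk => hs k ?_) hμN hπf).trans ?_
  · obtain ⟨i, hi, rfl⟩ := List.mem_map.1 hk
    have := List.mem_range.1 hi
    omega
  rw [hc, List.length_map, List.length_range]
  gcongr
  exact le_ciSup (bddAbove_range_tv_vecMul (pow_mem hPf _) hπf) ⟨_, hμN⟩

/-- with `T = K·t_mix(ε/2)` and `N = (K−1)·t_mix(ε/2)`,
`‖ν P_{1/T} ⋯ P_1 − π_f‖_TV ≤ (T!/(N! T^{T−N})) · max_μ ‖μ P_fin^{T−N} − π_f‖_TV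
 + (1 − T!/(N! T^{T−N}))`. -/
theorem stmt_14 {Ω : Type*} [Fintype Ω] [DecidableEq Ω] [Nonempty Ω]
    (Pinit Pfin : Matrix Ω Ω ℝ)
    (hPi : (∀ x y, 0 ≤ Pinit x y) ∧ ∀ x, ∑ y, Pinit x y = 1)
    (hPf : (∀ x y, 0 ≤ Pfin x y) ∧ ∀ x, ∑ y, Pfin x y = 1)
    (hirr : ∃ k : ℕ, ∀ x y, 0 < (Pfin ^ k) x y)
    (πf : Ω → ℝ) (hπf : (∀ x, 0 ≤ πf x) ∧ ∑ x, πf x = 1)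
    (hstat : ∀ y, ∑ x, πf x * Pfin x y = πf y)
    (ε : ℝ) (hε : 0 < ε) (hε' : ε < 1)
    (m : ℕ)
    (hm : m = sInf {t : ℕ | ∀ μ : Ω → ℝ, (∀ x, 0 ≤ μ x) → ∑ x, μ x = 1 →
        (1 / 2) * ∑ y, |(Matrix.vecMul μ (Pfin ^ t)) y - πf y| ≤ ε / 2})
    (K : ℕ) (hK : 1 ≤ K)
    (T N : ℕ) (hT : T = K * m) (hN : N = (K - 1) * m)
    (ν : Ω → ℝ) (hν : (∀ x, 0 ≤ ν x) ∧ ∑ x, ν x = 1) :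
    (1 / 2) * ∑ y,
        |((List.range T).foldl
            (fun (μ : Ω → ℝ) k => Matrix.vecMul μ
              ((1 - ((k : ℝ) + 1) / T) • Pinit + (((k : ℝ) + 1) / T) • Pfin)) ν) y
          - πf y| ≤
      ((T.factorial : ℝ) / (N.factorial * (T : ℝ) ^ (T - N))) *
        (⨆ μ : {μ : Ω → ℝ // (∀ x, 0 ≤ μ x) ∧ ∑ x, μ x = 1},
          (1 / 2) * ∑ y, |(Matrix.vecMul μ.1 (Pfin ^ (T - N))) y - πf y|) +
      (1 - (T.factorial : ℝ) / (N.factorial * (T : ℝ) ^ (T - N))) :=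
  stmt_14_general Pinit Pfin hPi hPf πf hπf m K T N hT hN ν hν
end
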